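/- Let T be a tree of order n and diameter d, let P = x_1⋯x_{d+1} be a path of length d in T, and let q be the matching number of T − {x_2, …, x_d}. If q ≥ 3, then i(T) ≤ 3^q · 2^{n−d−2q+1} · F_{d+1}. -/

import Mathlib

open SimpleGraph

/-- The number of independent sets in a graph (including the empty set). -/
noncomputable def numIndepSets {V : Type*} (G : SimpleGraph V) : ℕ :=
  Nat.card {s : Set V // ∀ u ∈ s, ∀ v ∈ s, ¬ G.Adj u v}

/-- The matching number of a graph: the maximum number of edges in a matching. -/
noncomputable def matchingNumber {V : Type*} (G : SimpleGraph V) : ℕ :=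
  sSup {m : ℕ | ∃ M : G.Subgraph, M.IsMatching ∧ M.edgeSet.ncard = m}

/-!
Let `I` be the interior `x₂, …, x_d` of the path and `M` a maximum matching of `T - I`. An
independent set is determined by its traces on `I`, on `V(M)` and on the remaining
`n - (d - 1) - 2q` vertices. The trace on `I` is an independent set of a graph containing a
Hamiltonian path on `d - 1` vertices, and the recurrence `i(G) ≤ i(G - a) + i(G - N[a])` bounds
those by `F_{d+1}`; on each edge of `M` there are 3 choices, and on each remaining vertex 2.
-/

noncomputable def numIndepSetsIn {V : Type*} (G : SimpleGraph V) (s : Set V) : ℕ :=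
  Nat.card {t : Set V // t ⊆ s ∧ ∀ u ∈ t, ∀ v ∈ t, ¬ G.Adj u v}

section IndepSetsIn

variable {V : Type*} (G : SimpleGraph V)

theorem numIndepSets_eq_numIndepSetsIn_univ : numIndepSets G = numIndepSetsIn G Set.univ :=
  Nat.card_congr (Equiv.subtypeEquivRight fun _ => by simp)

theorem numIndepSetsIn_empty : numIndepSetsIn G ∅ = 1 := by
  rw [numIndepSetsIn, Nat.card_eq_one_iff_exists]
  exact ⟨⟨∅, by simp⟩, fun t => Subtype.ext (Set.subset_empty_iff.mp t.2.1)⟩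

variable [Finite V]

theorem numIndepSetsIn_mono {s t : Set V} (h : s ⊆ t) :
    numIndepSetsIn G s ≤ numIndepSetsIn G t :=
  Nat.card_le_card_of_injective (fun r => ⟨r.1, r.2.1.trans h, r.2.2⟩)
    fun _ _ hr => Subtype.ext (Subtype.mk.inj hr)

theorem numIndepSetsIn_le_two_pow_ncard (s : Set V) : numIndepSetsIn G s ≤ 2 ^ s.ncard := by
  rw [← Set.ncard_powerset s, ← Nat.card_coe_set_eq]
  exact Nat.card_le_card_of_injective (fun r => ⟨r.1, r.2.1⟩)
    fun _ _ hr => Subtype.ext (Subtype.mk.inj hr)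

theorem numIndepSetsIn_union_le (s t : Set V) :
    numIndepSetsIn G (s ∪ t) ≤ numIndepSetsIn G s * numIndepSetsIn G t := by
  rw [numIndepSetsIn, numIndepSetsIn, numIndepSetsIn, ← Nat.card_prod]
  refine Nat.card_le_card_of_injective
    (fun r => (⟨r.1 ∩ s, Set.inter_subset_right, fun u hu v hv => r.2.2 u hu.1 v hv.1⟩,
      ⟨r.1 ∩ t, Set.inter_subset_right, fun u hu v hv => r.2.2 u hu.1 v hv.1⟩)) ?_
  intro r r' h
  simp only [Prod.mk.injEq, Subtype.mk.injEq] at h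
  apply Subtype.ext
  rw [← Set.inter_eq_left.mpr r.2.1, ← Set.inter_eq_left.mpr r'.2.1,
    Set.inter_union_distrib_left, Set.inter_union_distrib_left, h.1, h.2]

theorem numIndepSetsIn_insert_le (a : V) (s : Set V) :
    numIndepSetsIn G (insert a s) ≤
      numIndepSetsIn G s + numIndepSetsIn G (s \ G.neighborSet a) := by
  classical
  rw [numIndepSetsIn, numIndepSetsIn, numIndepSetsIn, ← Nat.card_sum]
  refine Nat.card_le_card_of_injective (fun t => if ha : a ∈ t.1
    then Sum.inr ⟨t.1 \ {a}, fun x hx => ⟨(t.2.1 hx.1).resolve_left hx.2,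
      fun hax => t.2.2 a ha x hx.1 hax⟩, fun u hu v hv => t.2.2 u hu.1 v hv.1⟩
    else Sum.inl ⟨t.1, fun x hx => (t.2.1 hx).resolve_left (ne_of_mem_of_not_mem hx ha),
      t.2.2⟩) ?_
  intro t t' h
  by_cases ha : a ∈ t.1 <;> by_cases ha' : a ∈ t'.1 <;>
    simp only [ha, ha', dite_true, dite_false, reduceCtorEq, Sum.inl.injEq, Sum.inr.injEq,
      Subtype.mk.injEq] at h
  · exact Subtype.ext <| by
      rw [← Set.insert_sdiff_self_of_mem ha, h, Set.insert_sdiff_self_of_mem ha']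
  · exact Subtype.ext h

theorem numIndepSetsIn_le_fib_of_isChain :
    ∀ {l : List V}, l.IsChain G.Adj → numIndepSetsIn G {v | v ∈ l} ≤ Nat.fib (l.length + 2)
  | [], _ => by simp [numIndepSetsIn_empty]
  | [a], _ => by
    simpa [numIndepSetsIn_empty, Nat.fib_add_two] using numIndepSetsIn_insert_le G a ∅
  | a :: b :: l, h => by
    have hab : G.Adj a b := (List.isChain_cons_cons.mp h).1
    have hrest : {v | v ∈ b :: l} \ G.neighborSet a ⊆ {v | v ∈ l} := by
      rintro x ⟨hx, hxa⟩
      rcases List.mem_cons.mp hx with rfl | hx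
      · exact absurd hab hxa
      · exact hx
    calc numIndepSetsIn G {v | v ∈ a :: b :: l}
        ≤ numIndepSetsIn G {v | v ∈ b :: l} +
            numIndepSetsIn G ({v | v ∈ b :: l} \ G.neighborSet a) := by
          rw [List.setOfPred_mem_cons]; exact numIndepSetsIn_insert_le G a _
      _ ≤ Nat.fib (l.length + 3) + Nat.fib (l.length + 2) :=
          add_le_add (numIndepSetsIn_le_fib_of_isChain h.tail)
            ((numIndepSetsIn_mono G hrest).trans (numIndepSetsIn_le_fib_of_isChain h.tail.tail))
      _ = Nat.fib ((a :: b :: l).length + 2) := by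
          rw [List.length_cons, List.length_cons, Nat.fib_add_two (n := l.length + 2)]; ring

theorem numIndepSetsIn_le_three_of_mem_edgeSet {e : Sym2 V} (he : e ∈ G.edgeSet) :
    numIndepSetsIn G e ≤ 3 := by
  induction e using Sym2.ind with
  | _ a b =>
    have hpair : {v | v ∈ [a, b]} = (s(a, b) : Set V) := by ext; simp
    have h := numIndepSetsIn_le_fib_of_isChain G (l := [a, b]) (by simpa using he)
    rwa [hpair] at h

theorem numIndepSetsIn_biUnion_le {ι : Type*} (A : ι → Set V) (F : Finset ι) :
    numIndepSetsIn G (⋃ i ∈ F, A i) ≤ ∏ i ∈ F, numIndepSetsIn G (A i) := by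
  classical
  induction F using Finset.induction_on with
  | empty => simp [numIndepSetsIn_empty]
  | insert i F hi ih =>
    rw [Finset.set_biUnion_insert, Finset.prod_insert hi]
    exact (numIndepSetsIn_union_le G _ _).trans (Nat.mul_le_mul_left _ ih)

theorem SimpleGraph.Subgraph.IsMatching.ncard_verts {M : G.Subgraph} (hM : M.IsMatching) :
    M.verts.ncard = 2 * M.edgeSet.ncard := by
  have hdisj : M.edgeSet.PairwiseDisjoint (fun e : Sym2 V => (e : Set V)) := by
    intro e he e' he' hne
    refine Set.disjoint_left.mpr fun v hv hv' => hne ?_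
    obtain ⟨x, rfl⟩ := Sym2.mem_iff_exists.mp hv
    obtain ⟨y, rfl⟩ := Sym2.mem_iff_exists.mp hv'
    rw [hM.eq_of_adj_left (M.mem_edgeSet.mp he) (M.mem_edgeSet.mp he')]
  have hpair : ∀ e ∈ M.edgeSet, (e : Set V).ncard = 2 * 1 := by
    intro e he
    induction e using Sym2.ind with
    | _ a b => rw [Sym2.coe_mk, Set.ncard_pair (M.adj_sub he).ne]
  rw [hM.verts_eq_biUnion_edgeSet, (Set.toFinite _).ncard_biUnion (fun _ _ => Set.toFinite _) hdisj,
    finsum_mem_congr rfl hpair, ← mul_finsum_mem, finsum_one]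

theorem numIndepSetsIn_verts_le_of_isMatching {M : G.Subgraph} (hM : M.IsMatching) :
    numIndepSetsIn G M.verts ≤ 3 ^ M.edgeSet.ncard := by
  have hE : M.edgeSet.Finite := Set.toFinite _
  rw [hM.verts_eq_biUnion_edgeSet, ← hE.coe_toFinset, Finset.set_biUnion_coe,
    Set.ncard_coe_finset]
  exact (numIndepSetsIn_biUnion_le G _ _).trans (Finset.prod_le_pow_card _ _ _ fun e he =>
    numIndepSetsIn_le_three_of_mem_edgeSet G (M.edgeSet_subset (hE.mem_toFinset.mp he)))

theorem numIndepSets_le_of_isChain_of_isMatching {l : List V} (hnd : l.Nodup)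
    (hl : l.IsChain G.Adj) {M : G.Subgraph} (hM : M.IsMatching)
    (hdisj : Disjoint {v | v ∈ l} M.verts) :
    numIndepSets G ≤ Nat.fib (l.length + 2) * 3 ^ M.edgeSet.ncard *
      2 ^ (Nat.card V - l.length - 2 * M.edgeSet.ncard) := by
  classical
  have hP : {v | v ∈ l}.ncard = l.length := by
    rw [← List.coe_toFinset, Set.ncard_coe_finset, List.toFinset_card_of_nodup hnd]
  set P : Set V := {v | v ∈ l}
  calc numIndepSets G = numIndepSetsIn G (P ∪ M.verts ∪ (P ∪ M.verts)ᶜ) := by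
        rw [Set.union_compl_self, numIndepSets_eq_numIndepSetsIn_univ]
    _ ≤ numIndepSetsIn G P * numIndepSetsIn G M.verts * numIndepSetsIn G (P ∪ M.verts)ᶜ :=
        (numIndepSetsIn_union_le G _ _).trans
          (Nat.mul_le_mul_right _ (numIndepSetsIn_union_le G _ _))
    _ ≤ Nat.fib (l.length + 2) * 3 ^ M.edgeSet.ncard * 2 ^ (P ∪ M.verts)ᶜ.ncard := by
        gcongr
        · exact numIndepSetsIn_le_fib_of_isChain G hl
        · exact numIndepSetsIn_verts_le_of_isMatching G hM
        · exact numIndepSetsIn_le_two_pow_ncard G _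
    _ = Nat.fib (l.length + 2) * 3 ^ M.edgeSet.ncard *
          2 ^ (Nat.card V - l.length - 2 * M.edgeSet.ncard) := by
        rw [Set.ncard_compl, Set.ncard_union_eq hdisj, hP, hM.ncard_verts, Nat.sub_sub]

end IndepSetsIn

theorem exists_isMatching_ncard_edgeSet_eq_matchingNumber {W : Type*} [Finite W]
    (H : SimpleGraph W) : ∃ M : H.Subgraph, M.IsMatching ∧ M.edgeSet.ncard = matchingNumber H :=
  Nat.sSup_mem (s := {m | ∃ M : H.Subgraph, M.IsMatching ∧ M.edgeSet.ncard = m})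
    ⟨0, ⊥, fun _ hv => hv.elim, by simp⟩
    ⟨Nat.card (Sym2 W), by rintro _ ⟨M, -, rfl⟩; exact Set.ncard_le_card _⟩

theorem SimpleGraph.Walk.IsPath.mem_support_tail_dropLast_iff {V : Type*} {G : SimpleGraph V}
    {u w v : V} {p : G.Walk u w} (hp : p.IsPath) :
    v ∈ p.support.tail.dropLast ↔ v ∈ p.support ∧ v ≠ u ∧ v ≠ w := by
  cases p with
  | nil => simp
  | cons h q =>
    have hq : q.support = q.support.dropLast ++ [w] := by
      nth_rw 1 [← List.dropLast_append_getLast q.support_ne_nil, Walk.getLast_support]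
    have hnd := hp.support_nodup
    rw [Walk.support_cons, hq] at hnd ⊢
    simp only [List.nodup_cons, List.nodup_append] at hnd
    grind

theorem exists_isMatching_verts_subset_ncard_eq_matchingNumber_induce {V : Type*} [Finite V]
    (G : SimpleGraph V) (s : Set V) : ∃ M : G.Subgraph, M.IsMatching ∧ M.verts ⊆ s ∧
      M.edgeSet.ncard = matchingNumber (G.induce s) := by
  obtain ⟨M, hM, hMq⟩ := exists_isMatching_ncard_edgeSet_eq_matchingNumber (G.induce s)
  have hf := (Embedding.induce (G := G) s).injective
  refine ⟨M.map (Embedding.induce s).toHom, hM.map _ hf, ?_, ?_⟩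
  · rintro _ ⟨v, -, rfl⟩
    exact v.2
  · rw [Subgraph.edgeSet_map]
    exact (Set.ncard_image_of_injective _ (Sym2.map.injective hf)).trans hMq

theorem stmt13_general {V : Type*} [Fintype V] (G : SimpleGraph V)
    (n d q : ℕ) (hn : Fintype.card V = n)
    {u w : V} (p : G.Walk u w) (hp : p.IsPath) (hlen : p.length = d)
    (hq : matchingNumber (SimpleGraph.induce
        {v : V | v ∉ p.support ∨ v = u ∨ v = w} G) = q) :
    numIndepSets G ≤ 3 ^ q * 2 ^ (n - d - 2 * q + 1) * Nat.fib (d + 1) := by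
  obtain ⟨M, hM, hMverts, hMq⟩ :=
    exists_isMatching_verts_subset_ncard_eq_matchingNumber_induce G
      {v : V | v ∉ p.support ∨ v = u ∨ v = w}
  set l := p.support.tail.dropLast
  have hl : l.length = d - 1 := by simp [l, hlen]
  have hdisj : Disjoint {v | v ∈ l} M.verts := Set.disjoint_left.mpr fun v hvl hvM => by
    obtain ⟨hvp, hvu, hvw⟩ := hp.mem_support_tail_dropLast_iff.mp hvl
    rcases hMverts hvM with h | h | h <;> contradiction
  have hcount := numIndepSets_le_of_isChain_of_isMatching G
    (hp.support_nodup.sublist ((List.dropLast_sublist _).trans (List.tail_sublist _)))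
    p.isChain_adj_support.tail.dropLast hM hdisj
  rw [hl, hMq, hq, Nat.card_eq_fintype_card, hn] at hcount
  -- at `d = 0` the subtraction `d - 1` truncates, and `F₂ = F₁` absorbs it
  have hfib : Nat.fib (d - 1 + 2) ≤ Nat.fib (d + 1) := by rcases d with _ | d <;> rfl
  calc numIndepSets G ≤ Nat.fib (d - 1 + 2) * 3 ^ q * 2 ^ (n - (d - 1) - 2 * q) := hcount
    _ ≤ Nat.fib (d + 1) * 3 ^ q * 2 ^ (n - d - 2 * q + 1) := by
        gcongr
        · norm_num
        · omega
    _ = 3 ^ q * 2 ^ (n - d - 2 * q + 1) * Nat.fib (d + 1) := by ring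

theorem stmt13 {V : Type*} [Fintype V] (G : SimpleGraph V) (hT : G.IsTree)
    (n d q : ℕ) (hn : Fintype.card V = n) (hd : G.diam = d)
    {u w : V} (p : G.Walk u w) (hp : p.IsPath) (hlen : p.length = d)
    (hq : matchingNumber (SimpleGraph.induce
        {v : V | v ∉ p.support ∨ v = u ∨ v = w} G) = q)
    (hq3 : 3 ≤ q) :
    numIndepSets G ≤ 3 ^ q * 2 ^ (n - d - 2 * q + 1) * Nat.fib (d + 1) :=
  stmt13_general G n d q hn p hp hlen hq
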